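/- arXiv:2605.19291 — 2 statements merged into one kernel-verified Lean document; each statement's English description precedes it below -/
import Mathlib

section
/- Let V, W ∈ R^{d×k} have orthonormal columns, and let R ∈ R^{k×k} be any orthogonal matrix. Then ‖W − VR‖_F ≤ √2 · √k · dist(W,V) + ‖VVᵀW − VR‖_F, and in particular for the Procrustes-optimal R one has ‖W − VR‖_F ≤ √2 · √k · dist(W,V). -/
open Matrix

/-- Operator (spectral) norm of a square real matrix. -/
noncomputable def opNorm {d : ℕ} (A : Matrix (Fin d) (Fin d) ℝ) : ℝ :=
  ‖(Matrix.toEuclideanCLM (𝕜 := ℝ) A :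
      EuclideanSpace ℝ (Fin d) →L[ℝ] EuclideanSpace ℝ (Fin d))‖

/-- Subspace distance `dist(W,V) = ‖VVᵀ − WWᵀ‖_op`. -/
noncomputable def distSub {d k : ℕ} (W V : Matrix (Fin d) (Fin k) ℝ) : ℝ :=
  opNorm (V * Vᵀ - W * Wᵀ)

/-- Frobenius norm of a rectangular real matrix. -/
noncomputable def frobNorm {m n : ℕ} (A : Matrix (Fin m) (Fin n) ℝ) : ℝ :=
  Real.sqrt (∑ i, ∑ j, (A i j) ^ 2)

/-!
The residual `W - VVᵀW = -(VVᵀ - WWᵀ) W` has Frobenius norm at most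
`‖VVᵀ - WWᵀ‖_op ‖W‖_F = √k · dist(W,V)`; with the triangle inequality this is the first bound.
For the second, put `M = VᵀW`: then `‖W - VR‖_F² = 2k - 2 tr(RᵀM)` for orthogonal `R`, while the
residual has squared norm `k - tr(MᵀM)`. As `1 - MᵀM` is the Gram matrix of the residual, the
singular values `σᵢ` of `M` lie in `[0, 1]`, so the orthogonal factor `R` of an SVD of `M` gives
`tr(RᵀM) = ∑ σᵢ ≥ ∑ σᵢ² = tr(MᵀM)`, i.e. `‖W - VR‖_F² ≤ 2 ‖W - VVᵀW‖_F²`. A Procrustes-optimal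
rotation does at least as well.
-/

open Module
open scoped RealInnerProductSpace

section SingularValueDecomposition

variable {E F : Type*} [NormedAddCommGroup E] [InnerProductSpace ℝ E] [FiniteDimensional ℝ E]
  [NormedAddCommGroup F] [InnerProductSpace ℝ F] [FiniteDimensional ℝ F]

theorem exists_orthonormalBasis_norm_smul_eq {ι : Type*} [Fintype ι]
    (hι : finrank ℝ F = Fintype.card ι) {u : ι → F} (hu : Pairwise fun i j => ⟪u i, u j⟫ = 0) :
    ∃ c : OrthonormalBasis ι ℝ F, ∀ i, u i = ‖u i‖ • c i := by
  have hnormalized : Orthonormal ℝ ({i | u i ≠ 0}.domRestrict fun i => ‖u i‖⁻¹ • u i) := by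
    refine ⟨fun i => norm_smul_inv_norm i.2, fun i j hij => ?_⟩
    simp only [Set.domRestrict_apply, real_inner_smul_left, real_inner_smul_right,
      hu (Subtype.coe_ne_coe.mpr hij), mul_zero]
  obtain ⟨c, hc⟩ := hnormalized.exists_orthonormalBasis_extension_of_card_eq hι
  refine ⟨c, fun i => ?_⟩
  by_cases hi : u i = 0
  · simp [hi]
  · rw [hc i hi, smul_smul, mul_inv_cancel₀ (norm_ne_zero_iff.mpr hi), one_smul]

theorem LinearMap.exists_orthonormalBasis_apply_eq_norm_smul {n : ℕ}
    (hE : finrank ℝ E = n) (hF : finrank ℝ F = n) (T : E →ₗ[ℝ] F) :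
    ∃ (b : OrthonormalBasis (Fin n) ℝ E) (c : OrthonormalBasis (Fin n) ℝ F),
      ∀ i, T (b i) = ‖T (b i)‖ • c i := by
  have hT := T.isSymmetric_adjoint_comp_self
  have horth :
      Pairwise fun i j => ⟪T (hT.eigenvectorBasis hE i), T (hT.eigenvectorBasis hE j)⟫ = 0 := by
    intro i j hij
    rw [← LinearMap.adjoint_inner_right, ← LinearMap.comp_apply, hT.apply_eigenvectorBasis,
      real_inner_smul_right, (hT.eigenvectorBasis hE).orthonormal.2 hij, mul_zero]
  obtain ⟨c, hc⟩ := exists_orthonormalBasis_norm_smul_eq (by simpa using hF) horth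
  exact ⟨_, c, hc⟩

end SingularValueDecomposition

theorem Matrix.exists_svd {k : ℕ} (M : Matrix (Fin k) (Fin k) ℝ) :
    ∃ (P Q : Matrix (Fin k) (Fin k) ℝ) (σ : Fin k → ℝ),
      Pᵀ * P = 1 ∧ Qᵀ * Q = 1 ∧ 0 ≤ σ ∧ M = P * diagonal σ * Qᵀ := by
  obtain ⟨b, c, hbc⟩ := (toEuclideanLin M).exists_orthonormalBasis_apply_eq_norm_smul
    finrank_euclideanSpace_fin finrank_euclideanSpace_fin
  set e := EuclideanSpace.basisFun (Fin k) ℝ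
  have hP : (e.toBasis.toMatrix c)ᵀ * e.toBasis.toMatrix c = 1 := by
    simpa using e.toMatrix_orthonormalBasis_conjTranspose_mul_self c
  have hQ : e.toBasis.toMatrix b * (e.toBasis.toMatrix b)ᵀ = 1 := by
    simpa using e.toMatrix_orthonormalBasis_self_mul_conjTranspose b
  refine ⟨e.toBasis.toMatrix c, e.toBasis.toMatrix b, fun i => ‖toEuclideanLin M (b i)‖, hP,
    mul_eq_one_comm.mp hQ, fun i => norm_nonneg _, ?_⟩
  have hMQ : M * e.toBasis.toMatrix b =
      e.toBasis.toMatrix c * diagonal fun i => ‖toEuclideanLin M (b i)‖ := by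
    ext x i
    have h := congr_arg (· x) (hbc i)
    rw [mul_diagonal, mul_comm]
    simpa [e, Basis.toMatrix_apply, mul_apply, mulVec, dotProduct] using h
  rw [← hMQ, Matrix.mul_assoc, hQ, Matrix.mul_one]

theorem Matrix.trace_mul_mul_transpose_of_transpose_mul_self {n R : Type*} [Fintype n]
    [DecidableEq n] [CommSemiring R] {Q : Matrix n n R} (hQ : Qᵀ * Q = 1) (A : Matrix n n R) :
    (Q * A * Qᵀ).trace = A.trace := by
  rw [trace_mul_cycle, hQ, Matrix.one_mul]

theorem exists_orthogonal_trace_transpose_mul_self_le {k : ℕ} (M : Matrix (Fin k) (Fin k) ℝ)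
    (hM : (1 - Mᵀ * M).PosSemidef) :
    ∃ R : Matrix (Fin k) (Fin k) ℝ, Rᵀ * R = 1 ∧ (Mᵀ * M).trace ≤ (Rᵀ * M).trace := by
  obtain ⟨P, Q, σ, hP, hQ, hσ, rfl⟩ := M.exists_svd
  have hQ' : Q * Qᵀ = 1 := mul_eq_one_comm.mp hQ
  have hgram :
      (P * diagonal σ * Qᵀ)ᵀ * (P * diagonal σ * Qᵀ) = Q * diagonal (σ * σ) * Qᵀ := by
    simp only [transpose_mul, transpose_transpose, diagonal_transpose, Matrix.mul_assoc]
    rw [← Matrix.mul_assoc Pᵀ, hP, Matrix.one_mul, ← Matrix.mul_assoc (diagonal σ),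
      diagonal_mul_diagonal]
    rfl
  have hσ_le_one : ∀ i, σ i ≤ 1 := by
    intro i
    have h := (hM.conjTranspose_mul_mul_same Q).diag_nonneg (i := i)
    rw [conjTranspose_eq_transpose_of_trivial, hgram, Matrix.mul_sub, Matrix.sub_mul,
      Matrix.mul_one, hQ, ← Matrix.mul_assoc, ← Matrix.mul_assoc, hQ, Matrix.one_mul,
      Matrix.mul_assoc, hQ, Matrix.mul_one] at h
    simp only [Matrix.sub_apply, one_apply_eq, diagonal_apply_eq, Pi.mul_apply] at h
    nlinarith [hσ i]
  refine ⟨P * Qᵀ, ?_, ?_⟩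
  · rw [transpose_mul, transpose_transpose, Matrix.mul_assoc, ← Matrix.mul_assoc Pᵀ, hP,
      Matrix.one_mul, hQ']
  · have hRM : (P * Qᵀ)ᵀ * (P * diagonal σ * Qᵀ) = Q * diagonal σ * Qᵀ := by
      rw [transpose_mul, transpose_transpose, Matrix.mul_assoc, ← Matrix.mul_assoc Pᵀ,
        ← Matrix.mul_assoc Pᵀ, hP, Matrix.one_mul, Matrix.mul_assoc]
    rw [hgram, hRM, trace_mul_mul_transpose_of_transpose_mul_self hQ,
      trace_mul_mul_transpose_of_transpose_mul_self hQ, trace_diagonal, trace_diagonal]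
    exact Finset.sum_le_sum fun i _ => mul_le_of_le_one_left (hσ i) (hσ_le_one i)

theorem frobNorm_nonneg {m n : ℕ} (A : Matrix (Fin m) (Fin n) ℝ) : 0 ≤ frobNorm A :=
  Real.sqrt_nonneg _

theorem frobNorm_sq {m n : ℕ} (A : Matrix (Fin m) (Fin n) ℝ) :
    frobNorm A ^ 2 = (Aᵀ * A).trace := by
  rw [frobNorm, Real.sq_sqrt (by positivity), Finset.sum_comm]
  simp [trace, mul_apply, sq]

theorem frobNorm_sq_eq_sum_norm_col {m n : ℕ} (A : Matrix (Fin m) (Fin n) ℝ) :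
    frobNorm A ^ 2 = ∑ j, ‖WithLp.toLp 2 (Aᵀ j)‖ ^ 2 := by
  rw [frobNorm, Real.sq_sqrt (by positivity), Finset.sum_comm]
  simp [EuclideanSpace.norm_sq_eq]

theorem frobNorm_neg {m n : ℕ} (A : Matrix (Fin m) (Fin n) ℝ) : frobNorm (-A) = frobNorm A := by
  simp [frobNorm]

theorem frobNorm_sub_le_frobNorm_sub_add_frobNorm_sub {m n : ℕ}
    (A B C : Matrix (Fin m) (Fin n) ℝ) :
    frobNorm (A - C) ≤ frobNorm (A - B) + frobNorm (B - C) := by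
  let := frobeniusNormedAddCommGroup (m := Fin m) (n := Fin n) (α := ℝ)
  have hnorm : ∀ X : Matrix (Fin m) (Fin n) ℝ, frobNorm X = ‖X‖ := fun X => by
    rw [frobenius_norm_def, frobNorm, Real.sqrt_eq_rpow]
    simp [Real.norm_eq_abs, sq_abs]
  simpa only [hnorm] using norm_sub_le_norm_sub_add_norm_sub A B C

theorem opNorm_nonneg {d : ℕ} (A : Matrix (Fin d) (Fin d) ℝ) : 0 ≤ opNorm A :=
  norm_nonneg _

theorem norm_mulVec_le_opNorm_mul {d : ℕ} (A : Matrix (Fin d) (Fin d) ℝ) (x : Fin d → ℝ) :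
    ‖WithLp.toLp 2 (A *ᵥ x)‖ ≤ opNorm A * ‖WithLp.toLp 2 x‖ := by
  simpa [opNorm] using (toEuclideanCLM (𝕜 := ℝ) A).le_opNorm (WithLp.toLp 2 x)

theorem frobNorm_mul_le {d k : ℕ} (A : Matrix (Fin d) (Fin d) ℝ) (B : Matrix (Fin d) (Fin k) ℝ) :
    frobNorm (A * B) ≤ opNorm A * frobNorm B := by
  rw [← pow_le_pow_iff_left₀ (frobNorm_nonneg _) (mul_nonneg (opNorm_nonneg A) (frobNorm_nonneg B))
      two_ne_zero,
    mul_pow, frobNorm_sq_eq_sum_norm_col, frobNorm_sq_eq_sum_norm_col, Finset.mul_sum]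
  refine Finset.sum_le_sum fun j _ => ?_
  rw [← mul_pow]
  have hcol : (A * B)ᵀ j = A *ᵥ Bᵀ j := by ext i; simp [mul_apply, mulVec, dotProduct]
  rw [hcol]
  exact pow_le_pow_left₀ (norm_nonneg _) (norm_mulVec_le_opNorm_mul A _) 2

section Subspaces

variable {d k : ℕ} {V W : Matrix (Fin d) (Fin k) ℝ}

theorem frobNorm_of_transpose_mul_self_eq_one (hW : Wᵀ * W = 1) : frobNorm W = Real.sqrt k := by
  rw [← Real.sqrt_sq (frobNorm_nonneg W), frobNorm_sq, hW, trace_one, Fintype.card_fin]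

theorem frobNorm_sub_mul_transpose_mul_le (V : Matrix (Fin d) (Fin k) ℝ) (hW : Wᵀ * W = 1) :
    frobNorm (W - V * Vᵀ * W) ≤ Real.sqrt k * distSub W V := by
  have hres : W - V * Vᵀ * W = -((V * Vᵀ - W * Wᵀ) * W) := by
    rw [Matrix.sub_mul, Matrix.mul_assoc W, hW, Matrix.mul_one, neg_sub]
  rw [hres, frobNorm_neg, mul_comm, ← frobNorm_of_transpose_mul_self_eq_one hW]
  exact frobNorm_mul_le _ W

theorem transpose_mul_self_sub_mul_transpose_mul (hV : Vᵀ * V = 1) (hW : Wᵀ * W = 1) :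
    (W - V * Vᵀ * W)ᵀ * (W - V * Vᵀ * W) = 1 - (Vᵀ * W)ᵀ * (Vᵀ * W) := by
  have hVV : ∀ X : Matrix (Fin k) (Fin k) ℝ, Vᵀ * (V * X) = X := fun X => by
    rw [← Matrix.mul_assoc, hV, Matrix.one_mul]
  simp only [transpose_sub, transpose_mul, transpose_transpose, Matrix.sub_mul, Matrix.mul_sub,
    Matrix.mul_assoc, hVV, hW]
  abel

theorem frobNorm_sub_mul_sq (hV : Vᵀ * V = 1) (hW : Wᵀ * W = 1) {R : Matrix (Fin k) (Fin k) ℝ}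
    (hR : Rᵀ * R = 1) : frobNorm (W - V * R) ^ 2 = 2 * k - 2 * (Rᵀ * (Vᵀ * W)).trace := by
  have hVR : (V * R)ᵀ * (V * R) = 1 := by
    rw [transpose_mul, Matrix.mul_assoc, ← Matrix.mul_assoc Vᵀ, hV, Matrix.one_mul, hR]
  rw [frobNorm_sq, transpose_sub, Matrix.sub_mul, Matrix.mul_sub, Matrix.mul_sub, hW, hVR,
    trace_sub, trace_sub, trace_sub, ← trace_transpose (Wᵀ * (V * R)), transpose_mul,
    transpose_transpose, transpose_mul, Matrix.mul_assoc, trace_one, Fintype.card_fin]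
  ring

theorem exists_orthogonal_frobNorm_sub_mul_le (hV : Vᵀ * V = 1) (hW : Wᵀ * W = 1) :
    ∃ R : Matrix (Fin k) (Fin k) ℝ, Rᵀ * R = 1 ∧
      frobNorm (W - V * R) ≤ Real.sqrt 2 * frobNorm (W - V * Vᵀ * W) := by
  have hgram := transpose_mul_self_sub_mul_transpose_mul hV hW
  have hcontraction : (1 - (Vᵀ * W)ᵀ * (Vᵀ * W)).PosSemidef := by
    rw [← hgram, ← conjTranspose_eq_transpose_of_trivial]
    exact posSemidef_conjTranspose_mul_self _
  obtain ⟨R, hR, htrace⟩ := exists_orthogonal_trace_transpose_mul_self_le _ hcontraction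
  refine ⟨R, hR, ?_⟩
  rw [← pow_le_pow_iff_left₀ (frobNorm_nonneg _)
      (mul_nonneg (Real.sqrt_nonneg 2) (frobNorm_nonneg _)) two_ne_zero, mul_pow,
    Real.sq_sqrt zero_le_two, frobNorm_sub_mul_sq hV hW hR, frobNorm_sq, hgram, trace_sub,
    trace_one, Fintype.card_fin]
  linarith

end Subspaces

/-- For matrices `V, W` with orthonormal columns and any orthogonal `R`,
`‖W − VR‖_F ≤ √2·√k·dist(W,V) + ‖VVᵀW − VR‖_F`; for a Procrustes-optimal `R`
one has `‖W − VR‖_F ≤ √2·√k·dist(W,V)`. -/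
theorem stmt4 (d k : ℕ) (V W : Matrix (Fin d) (Fin k) ℝ)
    (hV : Vᵀ * V = 1) (hW : Wᵀ * W = 1) :
    (∀ R : Matrix (Fin k) (Fin k) ℝ, Rᵀ * R = 1 →
      frobNorm (W - V * R) ≤
        Real.sqrt 2 * Real.sqrt k * distSub W V + frobNorm (V * Vᵀ * W - V * R)) ∧
    (∀ R : Matrix (Fin k) (Fin k) ℝ, Rᵀ * R = 1 →
      (∀ R' : Matrix (Fin k) (Fin k) ℝ, R'ᵀ * R' = 1 →
        frobNorm (W - V * R) ≤ frobNorm (W - V * R')) →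
      frobNorm (W - V * R) ≤ Real.sqrt 2 * Real.sqrt k * distSub W V) := by
  have hres := frobNorm_sub_mul_transpose_mul_le V hW
  have hdist : 0 ≤ Real.sqrt k * distSub W V := mul_nonneg (Real.sqrt_nonneg _) (opNorm_nonneg _)
  refine ⟨fun R _ => ?_, fun R _ hmin => ?_⟩
  · calc frobNorm (W - V * R)
        ≤ frobNorm (W - V * Vᵀ * W) + frobNorm (V * Vᵀ * W - V * R) :=
          frobNorm_sub_le_frobNorm_sub_add_frobNorm_sub _ _ _
      _ ≤ Real.sqrt 2 * Real.sqrt k * distSub W V + frobNorm (V * Vᵀ * W - V * R) := by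
          rw [mul_assoc]
          gcongr
          exact hres.trans (le_mul_of_one_le_left hdist (Real.one_le_sqrt.mpr one_le_two))
  · obtain ⟨R', hR', hle⟩ := exists_orthogonal_frobNorm_sub_mul_le hV hW
    calc frobNorm (W - V * R) ≤ frobNorm (W - V * R') := hmin R' hR'
      _ ≤ Real.sqrt 2 * frobNorm (W - V * Vᵀ * W) := hle
      _ ≤ Real.sqrt 2 * Real.sqrt k * distSub W V := by
          rw [mul_assoc]
          gcongr
end

section
/- Let (a_t) be nonnegative with a_{t+1} ≤ (1 − μη_t)a_t + b η_t · t^{−1} + C η_t² where η_t = η₀(t+1)^{−γ}, γ ∈ (0,1), μ, η₀ > 0, b, C ≥ 0, and μη_t ≤ 1 for all t. Then a_t = O(t^{−γ} + t^{−2(1−γ)}); in particular, there is a constant K with a_t ≤ K (t^{−γ} + t^{−2(1−γ)}) for all t ≥ 1. -/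
open Real

lemma bern_neg' {q h : ℝ} (hq0 : 0 ≤ q) (hq1 : q ≤ 1) (hh0 : 0 ≤ h) :
    1 - q * h ≤ (1 + h) ^ (-q) := by
  have h1 : (0:ℝ) < 1 + h := by linarith
  have h2 : (1 + h) ^ q ≤ 1 + q * h :=
    rpow_one_add_le_one_add_mul_self (by linarith) hq0 hq1
  have hpow : (0:ℝ) < (1 + h) ^ q := rpow_pos_of_pos h1 q
  have key : (1 - q * h) * (1 + h) ^ q ≤ 1 := by
    rcases le_or_gt (1 - q * h) 0 with h4 | h4
    · nlinarith
    · have h5 := mul_le_mul_of_nonneg_left h2 h4.le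
      nlinarith [sq_nonneg (q * h)]
  calc 1 - q * h = (1 - q * h) * (1 + h) ^ q * ((1 + h) ^ q)⁻¹ := by
        field_simp
    _ ≤ 1 * ((1 + h) ^ q)⁻¹ :=
        mul_le_mul_of_nonneg_right key (inv_nonneg.mpr hpow.le)
    _ = (1 + h) ^ (-q) := by rw [one_mul, ← rpow_neg h1.le]

lemma drift' {p x : ℝ} (hp0 : 0 ≤ p) (hp2 : p ≤ 2) (hx : 1 ≤ x) :
    x ^ (-p) - (x + 1) ^ (-p) ≤ 2 * x⁻¹ * x ^ (-p) := by
  have hx0 : (0:ℝ) < x := lt_of_lt_of_le one_pos hx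
  have hh0 : (0:ℝ) ≤ x⁻¹ := inv_nonneg.mpr hx0.le
  have hh1 : x⁻¹ ≤ 1 := by
    rw [inv_le_one_iff₀]; right; exact hx
  set q := p / 2 with hq
  have hq0 : 0 ≤ q := by positivity
  have hq1 : q ≤ 1 := by simp [hq]; linarith
  have hb : 1 - q * x⁻¹ ≤ (1 + x⁻¹) ^ (-q) := bern_neg' hq0 hq1 hh0
  have hbnn : 0 ≤ 1 - q * x⁻¹ := by nlinarith
  have hsq : (1 - q * x⁻¹) ^ 2 ≤ ((1 + x⁻¹) ^ (-q)) ^ 2 := by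
    apply pow_le_pow_left₀ hbnn hb
  have h1x : (0:ℝ) ≤ 1 + x⁻¹ := by linarith
  have hsq2 : ((1 + x⁻¹) ^ (-q)) ^ 2 = (1 + x⁻¹) ^ (-p) := by
    rw [← rpow_natCast ((1 + x⁻¹) ^ (-q)) 2, ← rpow_mul h1x]
    norm_num [hq]
  have hkey : 1 - 2 * x⁻¹ ≤ (1 + x⁻¹) ^ (-p) := by
    rw [← hsq2]
    nlinarith [hsq, sq_nonneg (q * x⁻¹), mul_le_mul_of_nonneg_right hq1 hh0]
  have hsplit : (x + 1) ^ (-p) = x ^ (-p) * (1 + x⁻¹) ^ (-p) := by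
    have : x + 1 = x * (1 + x⁻¹) := by field_simp
    rw [this, mul_rpow hx0.le h1x]
  have hxp : (0:ℝ) ≤ x ^ (-p) := (rpow_pos_of_pos hx0 _).le
  have := mul_le_mul_of_nonneg_left hkey hxp
  rw [hsplit]
  nlinarith

set_option maxHeartbeats 1000000 in
/-- FSGD recursion with minimizer drift: if
`a_{t+1} ≤ (1 − μη_t)a_t + bη_t·t⁻¹ + Cη_t²` with `η_t = η₀(t+1)^{−γ}`,
`γ ∈ (0,1)`, then `a_t = O(t^{−γ} + t^{−2(1−γ)})`. -/
theorem stmt12 (η a : ℕ → ℝ) (μ b C η₀ γ : ℝ)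
    (hμ : 0 < μ) (hb : 0 ≤ b) (hC : 0 ≤ C) (hη₀ : 0 < η₀)
    (hγ : γ ∈ Set.Ioo (0 : ℝ) 1)
    (hηform : ∀ t, η t = η₀ * ((t : ℝ) + 1) ^ (-γ))
    (hηsmall : ∀ t, μ * η t ≤ 1)
    (hanonneg : ∀ t, 0 ≤ a t)
    (hstep : ∀ t, 1 ≤ t →
      a (t + 1) ≤ (1 - μ * η t) * a t + b * η t * ((t : ℝ))⁻¹ + C * η t ^ 2) :
    ∃ K : ℝ, ∀ t : ℕ, 1 ≤ t →
      a t ≤ K * ((t : ℝ) ^ (-γ) + (t : ℝ) ^ (-(2 * (1 - γ)))) := by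
  obtain ⟨hγ0, hγ1⟩ := hγ
  set φ : ℕ → ℝ := fun t => (t : ℝ) ^ (-γ) + (t : ℝ) ^ (-(2 * (1 - γ))) with hφdef
  set c : ℝ := μ * η₀ * 2 ^ (-γ) with hc
  have hc0 : 0 < c := by
    have : (0:ℝ) < (2:ℝ) ^ (-γ) := rpow_pos_of_pos (by norm_num) _
    positivity
  -- basic facts for t ≥ 1
  have hφpos : ∀ t : ℕ, 1 ≤ t → 0 < φ t := by
    intro t ht
    have hx0 : (0:ℝ) < (t:ℝ) := by exact_mod_cast Nat.pos_of_ne_zero (by omega)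
    have := rpow_pos_of_pos hx0 (-γ)
    have := rpow_pos_of_pos hx0 (-(2 * (1 - γ)))
    simp only [hφdef]; positivity
  -- choose T₀
  have htend : Filter.Tendsto (fun t : ℕ => ((t:ℝ)) ^ (1 - γ)) Filter.atTop Filter.atTop :=
    (tendsto_rpow_atTop (by linarith)).comp tendsto_natCast_atTop_atTop
  obtain ⟨T₁, hT₁⟩ := (Filter.tendsto_atTop.mp htend (4 / c)).exists_forall_of_atTop
  set T₀ : ℕ := max T₁ 1 with hT₀
  have hT₀1 : 1 ≤ T₀ := le_max_right _ _
  have hNE : (Finset.Icc 1 T₀).Nonempty := ⟨1, Finset.mem_Icc.mpr ⟨le_refl 1, hT₀1⟩⟩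
  set K : ℝ := max ((Finset.Icc 1 T₀).sup' hNE fun s => a s / φ s)
      (2 * (b * η₀ + C * η₀ ^ 2) / c) with hK
  have hK0 : 0 ≤ K := le_trans (by positivity) (le_max_right _ _)
  have hKc : b * η₀ + C * η₀ ^ 2 ≤ c / 2 * K := by
    have h := le_max_right ((Finset.Icc 1 T₀).sup' hNE fun s => a s / φ s)
      (2 * (b * η₀ + C * η₀ ^ 2) / c)
    rw [div_le_iff₀ hc0] at h
    linarith
  -- base bound for 1 ≤ t ≤ T₀
  have base : ∀ t : ℕ, 1 ≤ t → t ≤ T₀ → a t ≤ K * φ t := by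
    intro t ht ht'
    have h1 : a t / φ t ≤ K :=
      le_trans (Finset.le_sup' (fun s => a s / φ s) (Finset.mem_Icc.mpr ⟨ht, ht'⟩))
        (le_max_left _ _)
    exact (div_le_iff₀ (hφpos t ht)).mp h1
  clear_value φ c K
  -- induction for t ≥ T₀
  have main : ∀ t : ℕ, T₀ ≤ t → a t ≤ K * φ t := by
    intro t ht
    induction t, ht using Nat.le_induction with
    | base => exact base T₀ hT₀1 (le_refl _)
    | succ t ht IH =>
      have ht1 : 1 ≤ t := le_trans hT₀1 ht
      have hx0 : (0:ℝ) < (t:ℝ) := by exact_mod_cast Nat.pos_of_ne_zero (by omega)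
      have hx1 : (1:ℝ) ≤ (t:ℝ) := by exact_mod_cast ht1
      have hP0 : 0 < φ t := hφpos t ht1
      have hX0 : (0:ℝ) ≤ (t:ℝ) ^ (-γ) := (rpow_pos_of_pos hx0 _).le
      have hηnn : 0 ≤ η t := by
        rw [hηform t]; positivity
      have h1mu : 0 ≤ 1 - μ * η t := by linarith [hηsmall t]
      -- η t ≤ η₀ * t^(-γ)
      have hη_le : η t ≤ η₀ * (t:ℝ) ^ (-γ) := by
        rw [hηform t]
        have := rpow_le_rpow_of_nonpos hx0 (by linarith : (t:ℝ) ≤ (t:ℝ) + 1)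
          (by linarith : -γ ≤ 0)
        exact mul_le_mul_of_nonneg_left this hη₀.le
      -- c * t^(-γ) ≤ μ * η t
      have hη_ge : c * (t:ℝ) ^ (-γ) ≤ μ * η t := by
        rw [hηform t]
        have h1 : ((2:ℝ) * (t:ℝ)) ^ (-γ) ≤ ((t:ℝ) + 1) ^ (-γ) :=
          rpow_le_rpow_of_nonpos (by linarith) (by linarith) (by linarith)
        have h2 : ((2:ℝ) * (t:ℝ)) ^ (-γ) = 2 ^ (-γ) * (t:ℝ) ^ (-γ) :=
          mul_rpow (by norm_num) hx0.le
        rw [h2] at h1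
        have h3 := mul_le_mul_of_nonneg_left h1 (by positivity : (0:ℝ) ≤ μ * η₀)
        calc c * (t:ℝ) ^ (-γ) = μ * η₀ * (2 ^ (-γ) * (t:ℝ) ^ (-γ)) := by rw [hc]; ring
          _ ≤ μ * η₀ * (((t:ℝ) + 1) ^ (-γ)) := h3
          _ = μ * (η₀ * ((t:ℝ) + 1) ^ (-γ)) := by ring
      -- t⁻¹ ≤ t^(-γ) ≤ φ t
      have hinvX : ((t:ℝ))⁻¹ ≤ (t:ℝ) ^ (-γ) := by
        rw [← rpow_neg_one (t:ℝ)]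
        exact rpow_le_rpow_of_exponent_le hx1 (by linarith)
      have hXφ : (t:ℝ) ^ (-γ) ≤ φ t := by
        have := (rpow_pos_of_pos hx0 (-(2 * (1 - γ)))).le
        simp only [hφdef]; linarith
      have hinvP : ((t:ℝ))⁻¹ ≤ φ t := le_trans hinvX hXφ
      -- drift bound
      have hφsucc : φ (t + 1) = ((t:ℝ) + 1) ^ (-γ) + ((t:ℝ) + 1) ^ (-(2 * (1 - γ))) := by
        simp only [hφdef]; push_cast; ring_nf
      have hdrift : φ t - φ (t + 1) ≤ 2 * ((t:ℝ))⁻¹ * φ t := by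
        have d1 := drift' (p := γ) (by linarith) (by linarith) hx1
        have d2 := drift' (p := 2 * (1 - γ)) (by linarith) (by linarith) hx1
        rw [hφsucc]
        simp only [hφdef]
        nlinarith [d1, d2]
      -- for t ≥ T₀: 2 t⁻¹ ≤ (c/2) t^(-γ)
      have hT : 2 * ((t:ℝ))⁻¹ ≤ c / 2 * (t:ℝ) ^ (-γ) := by
        have h4 := hT₁ t (le_trans (le_max_left T₁ 1) ht)
        rw [div_le_iff₀ hc0] at h4
        have hxsplit : (t:ℝ) ^ (-γ) = (t:ℝ) ^ (1 - γ) * ((t:ℝ))⁻¹ := by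
          rw [show -γ = (1 - γ) + (-1) by ring, rpow_add hx0, rpow_neg_one]
        rw [hxsplit]
        nlinarith [mul_nonneg (sub_nonneg.mpr h4) (inv_nonneg.mpr hx0.le)]
      set D : ℝ := c / 2 * K * ((t:ℝ) ^ (-γ) * φ t) with hD
      -- bound noise terms by D
      have hb1 : b * η t * ((t:ℝ))⁻¹ ≤ b * η₀ * ((t:ℝ) ^ (-γ) * φ t) := by
        have e1 : η t * ((t:ℝ))⁻¹ ≤ (η₀ * (t:ℝ) ^ (-γ)) * φ t :=
          mul_le_mul hη_le hinvP (inv_nonneg.mpr hx0.le) (by positivity)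
        calc b * η t * ((t:ℝ))⁻¹ = b * (η t * ((t:ℝ))⁻¹) := by ring
          _ ≤ b * ((η₀ * (t:ℝ) ^ (-γ)) * φ t) := mul_le_mul_of_nonneg_left e1 hb
          _ = b * η₀ * ((t:ℝ) ^ (-γ) * φ t) := by ring
      have hb2 : C * η t ^ 2 ≤ C * η₀ ^ 2 * ((t:ℝ) ^ (-γ) * φ t) := by
        have e2 : η t ^ 2 ≤ (η₀ * (t:ℝ) ^ (-γ)) ^ 2 := pow_le_pow_left₀ hηnn hη_le 2
        have e3 : η₀ ^ 2 * ((t:ℝ) ^ (-γ) * (t:ℝ) ^ (-γ)) ≤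
            η₀ ^ 2 * ((t:ℝ) ^ (-γ) * φ t) := by
          apply mul_le_mul_of_nonneg_left _ (sq_nonneg η₀)
          exact mul_le_mul_of_nonneg_left hXφ hX0
        calc C * η t ^ 2 ≤ C * ((η₀ * (t:ℝ) ^ (-γ)) ^ 2) := mul_le_mul_of_nonneg_left e2 hC
          _ = C * (η₀ ^ 2 * ((t:ℝ) ^ (-γ) * (t:ℝ) ^ (-γ))) := by ring
          _ ≤ C * (η₀ ^ 2 * ((t:ℝ) ^ (-γ) * φ t)) := mul_le_mul_of_nonneg_left e3 hC
          _ = C * η₀ ^ 2 * ((t:ℝ) ^ (-γ) * φ t) := by ring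
      have hnoise : b * η t * ((t:ℝ))⁻¹ + C * η t ^ 2 ≤ D := by
        have e4 := mul_le_mul_of_nonneg_right hKc
          (mul_nonneg hX0 hP0.le : 0 ≤ (t:ℝ) ^ (-γ) * φ t)
        rw [hD]; linarith [hb1, hb2, e4]
      have hB : K * φ t - K * φ (t + 1) ≤ D := by
        have h2 := mul_le_mul_of_nonneg_right hT hP0.le
        have h1 : φ t - φ (t + 1) ≤ c / 2 * ((t:ℝ) ^ (-γ)) * φ t := by linarith [hdrift]
        have h3 := mul_le_mul_of_nonneg_left h1 hK0
        rw [hD]; linarith [h3]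
      have hC2 : 2 * D ≤ K * (μ * η t * φ t) := by
        have h := mul_le_mul_of_nonneg_right hη_ge (mul_nonneg hK0 hP0.le)
        rw [hD]; linarith [h]
      have hIH' : (1 - μ * η t) * a t ≤ (1 - μ * η t) * (K * φ t) :=
        mul_le_mul_of_nonneg_left IH h1mu
      have hE : (1 - μ * η t) * (K * φ t) = K * φ t - K * (μ * η t * φ t) := by ring
      have hS := hstep t ht1
      linarith [hS, hIH', hnoise, hB, hC2]
  refine ⟨K, fun t ht => ?_⟩
  rcases le_or_gt t T₀ with h | h
  · simpa [hφdef] using base t ht h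
  · simpa [hφdef] using main t h.le
end
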